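/- Let d ≥ 2, ς ≥ 0, λ = (d+1)(ς + 1/2), M > 0, and set C_n = (λ)_n/(ς+1/2)_n, A_n = (λ)_n (λ−ς+1/2)_n/(n! (ς+1/2)_n), B_n = (−1)^n (λ)_n/n!. Then (i) lim_{n→∞} M C_n² / (1 + M(A_n − B_n)) = Γ(λ−ς+1/2) Γ(ς+1/2) / Γ(λ), and (ii) lim_{n→∞} n^{λ−2ς} · | M B_n / (1 + M A_n + d M B_n) | = Γ(λ−ς+1/2) / Γ(ς+1/2). -/

import Mathlib

open Filter Topology

noncomputable section

/-- The Pochhammer symbol `(a)_n = a (a+1) ⋯ (a+n-1)`. -/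
def pochh (a : ℝ) (n : ℕ) : ℝ := ∏ j ∈ Finset.range n, (a + j)

/-- `C_n = (λ)_n / (ς+1/2)_n`. -/
def Cseq (lam ς : ℝ) (n : ℕ) : ℝ := pochh lam n / pochh (ς + 1 / 2) n

/-- `A_n = (λ)_n (λ-ς+1/2)_n / (n! (ς+1/2)_n)`. -/
def Aseq (lam ς : ℝ) (n : ℕ) : ℝ :=
  pochh lam n * pochh (lam - ς + 1 / 2) n / ((n.factorial : ℝ) * pochh (ς + 1 / 2) n)

/-- `B_n = (-1)^n (λ)_n / n!`. -/
def Bseq (lam : ℝ) (n : ℕ) : ℝ := (-1) ^ n * pochh lam n / (n.factorial : ℝ)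

/-!
Euler's limit formula gives `(a)_n ∼ n! n^(a-1) / Γ(a)`, hence
`n^(b-a) (a)_n / (b)_n → Γ(b) / Γ(a)`. Write `α = ς + 1/2` and `μ = λ - ς + 1/2`. Then
`A_n = ((λ)_n / (α)_n) ((μ)_n / (1)_n) → ∞`, and `|B_n| / A_n = (α)_n / (μ)_n → 0` because
`α < μ`, i.e. `2ς < λ`. So both denominators are `∼ M A_n`, and the two limits reduce to
`C_n² / A_n = ((λ)_n / (μ)_n) ((1)_n / (α)_n)` and to `n^(μ-α) |B_n| / A_n`, in which the
powers of `n` cancel exactly.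
-/

lemma pochh_pos {a : ℝ} (ha : 0 < a) (n : ℕ) : 0 < pochh a n :=
  Finset.prod_pos fun j _ => by positivity

lemma pochh_succ (a : ℝ) (n : ℕ) : pochh a (n + 1) = pochh a n * (a + n) :=
  Finset.prod_range_succ _ _

lemma pochh_one (n : ℕ) : pochh 1 n = n.factorial := by
  induction n with
  | zero => simp [pochh]
  | succ n ih => rw [pochh_succ, ih, Nat.factorial_succ]; push_cast; ring

lemma tendsto_pochh_div_factorial_mul_rpow {a : ℝ} (ha : 0 < a) :
    Tendsto (fun n : ℕ => pochh a n / (n.factorial * (n : ℝ) ^ (a - 1)))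
      atTop (𝓝 (Real.Gamma a)⁻¹) := by
  have hG := (Real.GammaSeq_tendsto_Gamma a).inv₀ (Real.Gamma_pos_of_pos ha).ne'
  have h := (tendsto_natCast_div_add_atTop a).mul hG
  rw [one_mul] at h
  refine h.congr' ?_
  filter_upwards [eventually_gt_atTop 0] with n hn
  have hn0 : (0 : ℝ) < n := by exact_mod_cast hn
  have := pochh_pos ha n
  rw [Real.GammaSeq, ← pochh, pochh_succ, Real.rpow_sub_one hn0.ne']
  field_simp
  ring

lemma tendsto_rpow_mul_pochh_div_pochh {a b : ℝ} (ha : 0 < a) (hb : 0 < b) :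
    Tendsto (fun n : ℕ => (n : ℝ) ^ (b - a) * (pochh a n / pochh b n))
      atTop (𝓝 (Real.Gamma b / Real.Gamma a)) := by
  have h := (tendsto_pochh_div_factorial_mul_rpow ha).div
    (tendsto_pochh_div_factorial_mul_rpow hb) (inv_ne_zero (Real.Gamma_pos_of_pos hb).ne')
  rw [inv_div_inv] at h
  refine h.congr' ?_
  filter_upwards [eventually_gt_atTop 0] with n hn
  have hn0 : (0 : ℝ) < n := by exact_mod_cast hn
  have := pochh_pos hb n
  have := Nat.factorial_pos n
  simp only [Pi.div_apply]
  rw [Real.rpow_sub hn0, Real.rpow_sub hn0, Real.rpow_sub hn0, Real.rpow_one]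
  field_simp

lemma tendsto_pochh_div_pochh_atTop {a b : ℝ} (hb : 0 < b) (hba : b < a) :
    Tendsto (fun n : ℕ => pochh a n / pochh b n) atTop atTop := by
  have hpow : Tendsto (fun n : ℕ => (n : ℝ) ^ (a - b)) atTop atTop :=
    (tendsto_rpow_atTop (sub_pos.2 hba)).comp tendsto_natCast_atTop_atTop
  have h := hpow.atTop_mul_pos (div_pos (Real.Gamma_pos_of_pos hb)
    (Real.Gamma_pos_of_pos (hb.trans hba))) (tendsto_rpow_mul_pochh_div_pochh (hb.trans hba) hb)
  refine h.congr' ?_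
  filter_upwards [eventually_gt_atTop 0] with n hn
  have hn0 : (0 : ℝ) < n := by exact_mod_cast hn
  rw [← mul_assoc, ← Real.rpow_add hn0, sub_add_sub_cancel, sub_self, Real.rpow_zero, one_mul]

lemma tendsto_pochh_div_pochh_zero {a b : ℝ} (ha : 0 < a) (hab : a < b) :
    Tendsto (fun n : ℕ => pochh a n / pochh b n) atTop (𝓝 0) :=
  (tendsto_pochh_div_pochh_atTop ha hab).inv_tendsto_atTop.congr fun _ => inv_div _ _

section

variable {lam ς : ℝ}

lemma Aseq_eq_mul (n : ℕ) : Aseq lam ς n =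
    pochh lam n / pochh (ς + 1 / 2) n * (pochh (lam - ς + 1 / 2) n / pochh 1 n) := by
  rw [Aseq, pochh_one, div_mul_div_comm, mul_comm (pochh (ς + 1 / 2) n)]

lemma Aseq_pos (hα : 0 < ς + 1 / 2) (hαl : ς + 1 / 2 < lam) (n : ℕ) : 0 < Aseq lam ς n := by
  rw [Aseq_eq_mul, pochh_one]
  have := pochh_pos (hα.trans hαl) n
  have := pochh_pos hα n
  have := pochh_pos (show 0 < lam - ς + 1 / 2 by linarith) n
  have := Nat.factorial_pos n
  positivity

lemma tendsto_Aseq_atTop (hα : 0 < ς + 1 / 2) (hαl : ς + 1 / 2 < lam) :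
    Tendsto (Aseq lam ς) atTop atTop := by
  simp_rw [funext (Aseq_eq_mul (lam := lam))]
  exact (tendsto_pochh_div_pochh_atTop hα hαl).atTop_mul_atTop₀
    (tendsto_pochh_div_pochh_atTop one_pos (by linarith))

lemma abs_Bseq_div_Aseq (hα : 0 < ς + 1 / 2) (hαl : ς + 1 / 2 < lam) (n : ℕ) :
    |Bseq lam n| / Aseq lam ς n = pochh (ς + 1 / 2) n / pochh (lam - ς + 1 / 2) n := by
  have hlam := pochh_pos (hα.trans hαl) n
  have := pochh_pos hα n
  have := pochh_pos (show 0 < lam - ς + 1 / 2 by linarith) n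
  have := Nat.factorial_pos n
  rw [Bseq, Aseq, abs_div, abs_mul, abs_pow, abs_neg, abs_one, one_pow, one_mul,
    abs_of_pos hlam, Nat.abs_cast]
  field_simp

lemma tendsto_Bseq_div_Aseq (hα : 0 < ς + 1 / 2) (hαl : ς + 1 / 2 < lam) (h2ς : 2 * ς < lam) :
    Tendsto (fun n => Bseq lam n / Aseq lam ς n) atTop (𝓝 0) := by
  rw [tendsto_zero_iff_abs_tendsto_zero]
  refine (tendsto_pochh_div_pochh_zero (b := lam - ς + 1 / 2) hα (by linarith)).congr
    fun n => ?_
  rw [Function.comp_apply, abs_div, abs_of_pos (Aseq_pos hα hαl n), abs_Bseq_div_Aseq hα hαl]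

lemma tendsto_rpow_mul_abs_Bseq_div_Aseq (hα : 0 < ς + 1 / 2) (hαl : ς + 1 / 2 < lam) :
    Tendsto (fun n : ℕ => (n : ℝ) ^ (lam - 2 * ς) * (|Bseq lam n| / Aseq lam ς n)) atTop
      (𝓝 (Real.Gamma (lam - ς + 1 / 2) / Real.Gamma (ς + 1 / 2))) := by
  refine (tendsto_rpow_mul_pochh_div_pochh hα (by linarith)).congr fun n => ?_
  rw [abs_Bseq_div_Aseq hα hαl]
  ring_nf

lemma tendsto_sq_Cseq_div_Aseq (hα : 0 < ς + 1 / 2) (hαl : ς + 1 / 2 < lam) :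
    Tendsto (fun n => Cseq lam ς n ^ 2 / Aseq lam ς n) atTop
      (𝓝 (Real.Gamma (lam - ς + 1 / 2) * Real.Gamma (ς + 1 / 2) / Real.Gamma lam)) := by
  have hμ : 0 < lam - ς + 1 / 2 := by linarith
  have h := (tendsto_rpow_mul_pochh_div_pochh (hα.trans hαl) hμ).mul
    (tendsto_rpow_mul_pochh_div_pochh one_pos hα)
  rw [Real.Gamma_one, div_one, div_mul_eq_mul_div] at h
  refine h.congr' ?_
  filter_upwards [eventually_gt_atTop 0] with n hn
  have hn0 : (0 : ℝ) < n := by exact_mod_cast hn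
  have := pochh_pos (hα.trans hαl) n
  have := pochh_pos hα n
  have := pochh_pos hμ n
  have := Nat.factorial_pos n
  have hpow : (n : ℝ) ^ (lam - ς + 1 / 2 - lam) * (n : ℝ) ^ (ς + 1 / 2 - 1) = 1 := by
    rw [← Real.rpow_add hn0, ← Real.rpow_zero (n : ℝ)]
    ring_nf
  have hCA : Cseq lam ς n ^ 2 / Aseq lam ς n =
      pochh lam n / pochh (lam - ς + 1 / 2) n * (pochh 1 n / pochh (ς + 1 / 2) n) := by
    rw [Cseq, Aseq, pochh_one]
    field_simp
  rw [hCA]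
  linear_combination (pochh lam n / pochh (lam - ς + 1 / 2) n *
    (pochh 1 n / pochh (ς + 1 / 2) n)) * hpow

end

lemma tendsto_one_add_mul_add_mul_div_mul {u v : ℕ → ℝ} (hu : Tendsto u atTop atTop)
    (hvu : Tendsto (fun n => v n / u n) atTop (𝓝 0)) {M : ℝ} (hM : M ≠ 0) (K : ℝ) :
    Tendsto (fun n => (1 + M * u n + K * v n) / (M * u n)) atTop (𝓝 1) := by
  have h := ((hu.inv_tendsto_atTop.div_const M).add_const 1).add (hvu.const_mul (K / M))
  rw [zero_div, zero_add, mul_zero, add_zero] at h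
  refine h.congr' ?_
  filter_upwards [hu.eventually_gt_atTop 0] with n hn
  simp only [Pi.inv_apply]
  field_simp

/-- Let `d ≥ 2`, `ς ≥ 0`, `λ = (d+1)(ς+1/2)`, `M > 0`. Then
(i) `lim_n M C_n² / (1 + M(A_n − B_n)) = Γ(λ−ς+1/2) Γ(ς+1/2) / Γ(λ)`, and
(ii) `lim_n n^{λ−2ς} · |M B_n / (1 + M A_n + d M B_n)| = Γ(λ−ς+1/2) / Γ(ς+1/2)`. -/
theorem mass_coefficient_asymptotics
    (d : ℕ) (hd : 2 ≤ d) (ς : ℝ) (hς : 0 ≤ ς) (M : ℝ) (hM : 0 < M)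
    (lam : ℝ) (hlam : lam = (d + 1) * (ς + 1 / 2)) :
    Tendsto (fun n : ℕ =>
        M * (Cseq lam ς n) ^ 2 / (1 + M * (Aseq lam ς n - Bseq lam n)))
      atTop
      (𝓝 (Real.Gamma (lam - ς + 1 / 2) * Real.Gamma (ς + 1 / 2) /
        Real.Gamma lam)) ∧
    Tendsto (fun n : ℕ =>
        (n : ℝ) ^ (lam - 2 * ς) *
          |M * Bseq lam n / (1 + M * Aseq lam ς n + d * M * Bseq lam n)|)
      atTop
      (𝓝 (Real.Gamma (lam - ς + 1 / 2) / Real.Gamma (ς + 1 / 2))) := by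
  have hd' : (2 : ℝ) ≤ d := by exact_mod_cast hd
  have hα : 0 < ς + 1 / 2 := by linarith
  have hαl : ς + 1 / 2 < lam := by rw [hlam]; nlinarith
  have hA := tendsto_Aseq_atTop hα hαl
  have hBA := tendsto_Bseq_div_Aseq hα hαl (by rw [hlam]; nlinarith)
  constructor
  · have h := (tendsto_sq_Cseq_div_Aseq hα hαl).div
      (tendsto_one_add_mul_add_mul_div_mul hA hBA hM.ne' (-M)) one_ne_zero
    rw [div_one] at h
    refine h.congr fun n => ?_
    have := Aseq_pos hα hαl n
    simp only [Pi.div_apply]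
    rw [div_div_div_eq]
    field_simp
    ring_nf
  · have h := (tendsto_rpow_mul_abs_Bseq_div_Aseq hα hαl).div
      (tendsto_one_add_mul_add_mul_div_mul hA hBA hM.ne' (d * M)).abs (by norm_num)
    rw [abs_one, div_one] at h
    refine h.congr fun n => ?_
    have := Aseq_pos hα hαl n
    simp only [Pi.div_apply]
    rw [abs_div, abs_div, abs_mul, abs_mul, abs_of_pos hM, abs_of_pos this]
    field_simp
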